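/- arXiv:2102.11935 — 2 statements merged into one kernel-verified Lean document; each statement's English description precedes it below -/
import Mathlib

section
/- Let f_W(x) = W^L ρ(W^{L-1} ⋯ ρ(W^1 x) ⋯) be an L-layer neural network with ReLU activation ρ(t) = max(t, 0), and let f_Ŵ(x̂) = Ŵ^L ρ(W^{L−1} ⋯ ρ(W^1 x̂) ⋯) denote the network in which only the last weight matrix is replaced by Ŵ^L ∈ B_{W^L}(ε_L) and the input by x̂ ∈ B_x(ε_x). Then for every pair of output classes i, j: f^{ij}_{Ŵ}(x̂) ≤ f^{ij}_W(x) + ε_x ‖W^L_{i,:} − W^L_{j,:}‖_1 ∏_{m=1}^{L−1} ‖W^m‖_∞ + 2 ε_L (∏_{m=1}^{L−1} ‖W^m‖_1)(‖x‖_1 + d_0 ε_x), where d_0 is the dimension of x. -/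
/-- Vector ℓ1 norm: `‖v‖₁ = Σ_q |v_q|`. -/
noncomputable def vecL1 {n : ℕ} (v : Fin n → ℝ) : ℝ := ∑ q, |v q|

/-- Vector ℓ∞ norm: `‖v‖_∞ = max_q |v_q|`. -/
noncomputable def vecLinf {n : ℕ} (v : Fin n → ℝ) : ℝ := ⨆ q, |v q|

/-- Matrix ℓ∞→ℓ∞ operator norm: `‖W‖_∞ = max_p Σ_q |W_{p,q}|`. -/
noncomputable def matLinf {m n : ℕ} (W : Matrix (Fin m) (Fin n) ℝ) : ℝ := ⨆ p, ∑ q, |W p q|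

/-- Matrix ℓ1→ℓ1 operator norm: `‖W‖₁ = max_q Σ_p |W_{p,q}|`. -/
noncomputable def matL1 {m n : ℕ} (W : Matrix (Fin m) (Fin n) ℝ) : ℝ := ⨆ q, ∑ p, |W p q|

/-- `zLayer d ρ W k x` is the `k`-th zLayer-layer output
`z^k_W(x) = ρ(W^k ⋯ ρ(W^1 x) ⋯)`, with `z^0_W(x) = x`.
Here `W k` denotes the paper's weight matrix `W^{k+1}`
(so `W : ∀ k, Matrix (Fin (d (k+1))) (Fin (d k)) ℝ` lists `W^1, W^2, …`). -/
noncomputable def zLayer (d : ℕ → ℕ) (ρ : ℝ → ℝ)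
    (W : ∀ k, Matrix (Fin (d (k + 1))) (Fin (d k)) ℝ) :
    (k : ℕ) → (Fin (d 0) → ℝ) → Fin (d k) → ℝ
  | 0, x => x
  | k + 1, x => fun p => ρ ((W k).mulVec (zLayer d ρ W k x) p)

/-- `nnet d ρ W k x = (W^{k+1}) z^k_W(x)` is the output of the `(k+1)`-layer network
`f_W(x) = W^{k+1} ρ(W^k ⋯ ρ(W^1 x) ⋯)`.  In particular `nnet d ρ W (L-1)` is the
paper's `L`-layer network. -/
noncomputable def nnet (d : ℕ → ℕ) (ρ : ℝ → ℝ)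
    (W : ∀ k, Matrix (Fin (d (k + 1))) (Fin (d k)) ℝ) (k : ℕ)
    (x : Fin (d 0) → ℝ) : Fin (d (k + 1)) → ℝ :=
  (W k).mulVec (zLayer d ρ W k x)

/-- The ReLU activation `ρ(t) = max(t, 0)`. -/
noncomputable def relu : ℝ → ℝ := fun t => max t 0

/-! The margin difference splits as `(W_i - W_j)·(ẑ - z) + ((Ŵ_i - W_i) - (Ŵ_j - W_j))·ẑ`,
where `z, ẑ` are the penultimate activations at `x, x̂`. Since ReLU is 1-Lipschitz and fixes `0`,
each layer enlarges sup-norm distances by at most `‖W^m‖_∞` and ℓ1 norms by at most `‖W^m‖₁`,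
so `|ẑ - z| ≤ εx ∏ ‖W^m‖_∞` entrywise and `‖ẑ‖₁ ≤ ∏ ‖W^m‖₁ (‖x‖₁ + d₀ εx)`; Hölder's
inequality `u·w ≤ ‖u‖₁ max |w|` bounds both terms. -/

open Matrix

section Norms

variable {m n : ℕ}

lemma matLinf_nonneg (W : Matrix (Fin m) (Fin n) ℝ) : 0 ≤ matLinf W :=
  Real.iSup_nonneg fun _ => Finset.sum_nonneg fun _ _ => abs_nonneg _

lemma matL1_nonneg (W : Matrix (Fin m) (Fin n) ℝ) : 0 ≤ matL1 W :=
  Real.iSup_nonneg fun _ => Finset.sum_nonneg fun _ _ => abs_nonneg _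

lemma vecL1_row_le_matLinf (W : Matrix (Fin m) (Fin n) ℝ) (p : Fin m) :
    vecL1 (W p) ≤ matLinf W :=
  le_ciSup (f := fun p => ∑ q, |W p q|) (Set.finite_range _).bddAbove p

lemma sum_abs_col_le_matL1 (W : Matrix (Fin m) (Fin n) ℝ) (q : Fin n) :
    ∑ p, |W p q| ≤ matL1 W :=
  le_ciSup (f := fun q => ∑ p, |W p q|) (Set.finite_range _).bddAbove q

lemma vecL1_le_add_of_abs_sub_le {x y : Fin n → ℝ} {ε : ℝ} (h : ∀ q, |y q - x q| ≤ ε) :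
    vecL1 y ≤ vecL1 x + n * ε := by
  calc vecL1 y ≤ ∑ q, (|x q| + ε) :=
        Finset.sum_le_sum fun q _ => by linarith [abs_sub_abs_le_abs_sub (y q) (x q), h q]
    _ = vecL1 x + n * ε := by simp [vecL1, Finset.sum_add_distrib]

lemma abs_dotProduct_le_vecL1_mul {u w : Fin n → ℝ} {c : ℝ} (h : ∀ q, |w q| ≤ c) :
    |u ⬝ᵥ w| ≤ vecL1 u * c :=
  calc |u ⬝ᵥ w| ≤ ∑ q, |u q| * |w q| := by
        simpa only [dotProduct, abs_mul] using Finset.abs_sum_le_sum_abs (fun q => u q * w q) _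
    _ ≤ ∑ q, |u q| * c := Finset.sum_le_sum fun q _ => by gcongr; exact h q
    _ = vecL1 u * c := (Finset.sum_mul ..).symm

lemma abs_mulVec_le_matLinf_mul (W : Matrix (Fin m) (Fin n) ℝ) {v : Fin n → ℝ} {c : ℝ}
    (hc : 0 ≤ c) (h : ∀ q, |v q| ≤ c) (p : Fin m) :
    |(W *ᵥ v) p| ≤ matLinf W * c :=
  (abs_dotProduct_le_vecL1_mul h).trans
    (mul_le_mul_of_nonneg_right (vecL1_row_le_matLinf W p) hc)

lemma vecL1_mulVec_le (W : Matrix (Fin m) (Fin n) ℝ) (v : Fin n → ℝ) :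
    vecL1 (W *ᵥ v) ≤ matL1 W * vecL1 v :=
  calc vecL1 (W *ᵥ v) ≤ ∑ p, ∑ q, |W p q| * |v q| :=
        Finset.sum_le_sum fun p _ => by
          simpa only [Matrix.mulVec, dotProduct, abs_mul] using
            Finset.abs_sum_le_sum_abs (fun q => W p q * v q) _
    _ = ∑ q, (∑ p, |W p q|) * |v q| := by
        rw [Finset.sum_comm]; simp only [Finset.sum_mul]
    _ ≤ ∑ q, matL1 W * |v q| :=
        Finset.sum_le_sum fun q _ => by gcongr; exact sum_abs_col_le_matL1 W q
    _ = matL1 W * vecL1 v := (Finset.mul_sum ..).symm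

end Norms

lemma relu_zero : relu 0 = 0 := max_self 0

lemma lipschitzWith_one_relu : LipschitzWith 1 relu := LipschitzWith.id.max_const 0

section Layers

variable {d : ℕ → ℕ} {ρ : ℝ → ℝ} (W : ∀ k, Matrix (Fin (d (k + 1))) (Fin (d k)) ℝ)

lemma abs_zLayer_sub_le (hρ : LipschitzWith 1 ρ) {x xhat : Fin (d 0) → ℝ} {ε : ℝ} (hε : 0 ≤ ε)
    (hx : ∀ q, |xhat q - x q| ≤ ε) (k : ℕ) (p : Fin (d k)) :
    |zLayer d ρ W k xhat p - zLayer d ρ W k x p| ≤ (∏ m ∈ Finset.range k, matLinf (W m)) * ε := by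
  induction k with
  | zero => simpa [zLayer] using hx p
  | succ k ih =>
    have hδ : 0 ≤ (∏ m ∈ Finset.range k, matLinf (W m)) * ε :=
      mul_nonneg (Finset.prod_nonneg fun m _ => matLinf_nonneg _) hε
    calc |zLayer d ρ W (k + 1) xhat p - zLayer d ρ W (k + 1) x p|
        ≤ |(W k *ᵥ zLayer d ρ W k xhat) p - (W k *ᵥ zLayer d ρ W k x) p| := by
          simpa [zLayer, Real.dist_eq] using hρ.dist_le_mul
            ((W k *ᵥ zLayer d ρ W k xhat) p) ((W k *ᵥ zLayer d ρ W k x) p)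
      _ ≤ matLinf (W k) * ((∏ m ∈ Finset.range k, matLinf (W m)) * ε) := by
          rw [← Pi.sub_apply, ← Matrix.mulVec_sub]
          exact abs_mulVec_le_matLinf_mul _ hδ ih p
      _ = (∏ m ∈ Finset.range (k + 1), matLinf (W m)) * ε := by
          rw [Finset.prod_range_succ]; ring

lemma vecL1_zLayer_le (hρ : LipschitzWith 1 ρ) (hρ0 : ρ 0 = 0) (x : Fin (d 0) → ℝ) (k : ℕ) :
    vecL1 (zLayer d ρ W k x) ≤ (∏ m ∈ Finset.range k, matL1 (W m)) * vecL1 x := by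
  induction k with
  | zero => simp [zLayer]
  | succ k ih =>
    calc vecL1 (zLayer d ρ W (k + 1) x) ≤ vecL1 (W k *ᵥ zLayer d ρ W k x) :=
          Finset.sum_le_sum fun p _ => by
            simpa [zLayer, Real.dist_eq, hρ0] using hρ.dist_le_mul ((W k *ᵥ zLayer d ρ W k x) p) 0
      _ ≤ matL1 (W k) * ((∏ m ∈ Finset.range k, matL1 (W m)) * vecL1 x) :=
          (vecL1_mulVec_le _ _).trans (mul_le_mul_of_nonneg_left ih (matL1_nonneg _))
      _ = (∏ m ∈ Finset.range (k + 1), matL1 (W m)) * vecL1 x := by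
          rw [Finset.prod_range_succ]; ring

end Layers

lemma mulVec_sub_mulVec_apply {m n : ℕ} (A : Matrix (Fin m) (Fin n) ℝ) (v : Fin n → ℝ)
    (i j : Fin m) : (A *ᵥ v) i - (A *ᵥ v) j = (A i - A j) ⬝ᵥ v :=
  (sub_dotProduct ..).symm

lemma margin_perturb_le {m n : ℕ} {A Ahat : Matrix (Fin m) (Fin n) ℝ} {z zhat : Fin n → ℝ}
    {εA δ : ℝ} (hA : ∀ p q, |Ahat p q - A p q| ≤ εA) (hz : ∀ q, |zhat q - z q| ≤ δ)
    (i j : Fin m) :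
    (Ahat *ᵥ zhat) i - (Ahat *ᵥ zhat) j ≤
      (A *ᵥ z) i - (A *ᵥ z) j + vecL1 (fun q => A i q - A j q) * δ + 2 * εA * vecL1 zhat := by
  have hsplit : (Ahat i - Ahat j) ⬝ᵥ zhat - (A i - A j) ⬝ᵥ z =
      (A i - A j) ⬝ᵥ (zhat - z) + zhat ⬝ᵥ ((Ahat i - A i) - (Ahat j - A j)) := by
    simp only [dotProduct_sub, sub_dotProduct, dotProduct_comm zhat]; ring
  have hweights : ∀ q, |((Ahat i - A i) - (Ahat j - A j)) q| ≤ 2 * εA := fun q => by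
    simpa [two_mul] using (abs_sub _ _).trans (add_le_add (hA i q) (hA j q))
  have hshift : |(A i - A j) ⬝ᵥ (zhat - z)| ≤ vecL1 (fun q => A i q - A j q) * δ :=
    abs_dotProduct_le_vecL1_mul hz
  have hreweight := abs_dotProduct_le_vecL1_mul (u := zhat) hweights
  rw [mulVec_sub_mulVec_apply, mulVec_sub_mulVec_apply]
  linarith [le_abs_self ((A i - A j) ⬝ᵥ (zhat - z)),
    le_abs_self (zhat ⬝ᵥ ((Ahat i - A i) - (Ahat j - A j)))]

theorem statement1_general
    (d : ℕ → ℕ) (L : ℕ)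
    (W : ∀ k, Matrix (Fin (d (k + 1))) (Fin (d k)) ℝ)
    (WhatL : Matrix (Fin (d (L - 1 + 1))) (Fin (d (L - 1))) ℝ)
    (εL εx : ℝ) (hεL : 0 ≤ εL) (hεx : 0 ≤ εx)
    (hWL : ∀ p q, |WhatL p q - W (L - 1) p q| ≤ εL)
    (x xhat : Fin (d 0) → ℝ) (hx : ∀ q, |xhat q - x q| ≤ εx)
    (i j : Fin (d (L - 1 + 1))) :
    WhatL.mulVec (zLayer d relu W (L - 1) xhat) i -
        WhatL.mulVec (zLayer d relu W (L - 1) xhat) j ≤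
      (nnet d relu W (L - 1) x i - nnet d relu W (L - 1) x j) +
        εx * vecL1 (fun q => W (L - 1) i q - W (L - 1) j q) *
          (∏ m ∈ Finset.range (L - 1), matLinf (W m)) +
        2 * εL * (∏ m ∈ Finset.range (L - 1), matL1 (W m)) *
          (vecL1 x + (d 0 : ℝ) * εx) := by
  have hmargin := margin_perturb_le hWL
    (abs_zLayer_sub_le W lipschitzWith_one_relu hεx hx (L - 1)) i j
  have hzhat : vecL1 (zLayer d relu W (L - 1) xhat) ≤
      (∏ m ∈ Finset.range (L - 1), matL1 (W m)) * (vecL1 x + d 0 * εx) :=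
    (vecL1_zLayer_le W lipschitzWith_one_relu relu_zero xhat (L - 1)).trans <|
      mul_le_mul_of_nonneg_left (vecL1_le_add_of_abs_sub_le hx)
        (Finset.prod_nonneg fun m _ => matL1_nonneg _)
  have hεL2 : 0 ≤ 2 * εL := by positivity
  rw [nnet]
  linarith [mul_le_mul_of_nonneg_left hzhat hεL2]

/-- Theorem 1, case `N = L`: joint perturbation of the last weight
matrix and the input, with ReLU activation.

Indexing convention: `W k` is the paper's `W^{k+1}`, so the paper's `L`-layer network
is `net d relu W (L-1)`, the last matrix `W^L` is `W (L-1)`, and the perturbed network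
is `Ŵ^L ρ(W^{L-1} ⋯ ρ(W^1 x̂) ⋯) = WhatL.mulVec (zLayer d relu W (L-1) xhat)`.
`∏_{m=1}^{L-1}` becomes a product over `Finset.range (L-1)`; `d_0 = d 0`. -/
theorem statement1
    (d : ℕ → ℕ) (L : ℕ) (hL : 1 ≤ L)
    (W : ∀ k, Matrix (Fin (d (k + 1))) (Fin (d k)) ℝ)
    (WhatL : Matrix (Fin (d (L - 1 + 1))) (Fin (d (L - 1))) ℝ)
    (εL εx : ℝ) (hεL : 0 ≤ εL) (hεx : 0 ≤ εx)
    (hWL : ∀ p q, |WhatL p q - W (L - 1) p q| ≤ εL)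
    (x xhat : Fin (d 0) → ℝ) (hx : ∀ q, |xhat q - x q| ≤ εx)
    (i j : Fin (d (L - 1 + 1))) :
    WhatL.mulVec (zLayer d relu W (L - 1) xhat) i -
        WhatL.mulVec (zLayer d relu W (L - 1) xhat) j ≤
      (nnet d relu W (L - 1) x i - nnet d relu W (L - 1) x j) +
        εx * vecL1 (fun q => W (L - 1) i q - W (L - 1) j q) *
          (∏ m ∈ Finset.range (L - 1), matLinf (W m)) +
        2 * εL * (∏ m ∈ Finset.range (L - 1), matL1 (W m)) *
          (vecL1 x + (d 0 : ℝ) * εx) :=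
  statement1_general d L W WhatL εL εx hεL hεx hWL x xhat hx i j
end

section
/- Let f_W(x) = W^L ρ(W^{L-1} ⋯ ρ(W^1 x) ⋯) be an L-layer neural network with nonnegative activation ρ, and let f_Ŵ(x̂) = Ŵ^L ρ(W^{L−1} ⋯ ρ(W^1 x̂) ⋯) be the network with only the last weight matrix replaced by Ŵ^L ∈ B_{W^L}(ε_L) and the input by x̂ ∈ B_x(ε_x). Then for every pair of output classes i, j: f^{ij}_{Ŵ}(x̂) − f^{ij}_W(x) ≤ ‖W^L_{i,:} − W^L_{j,:}‖_1 ‖z^{L−1}_W(x̂) − z^{L−1}_W(x)‖_∞ + 2 ε_L ‖z^{L−1}_W(x̂)‖_1, where z^{L−1}_W(u) = ρ(W^{L−1} ⋯ ρ(W^1 u) ⋯). -/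
/-!
Write `Ŵ = W + Δ` for the last layer. The change of the margin splits as
`(W_i − W_j) ⬝ (ẑ − z) + (Δ_i − Δ_j) ⬝ ẑ`: Hölder's inequality bounds the first term, and
`|Δ_i − Δ_j| ≤ 2 ε` entrywise bounds the second by `2 ε ‖ẑ‖₁`.
-/

open Matrix

theorem le_vecLinf {n : ℕ} (v : Fin n → ℝ) (q : Fin n) : |v q| ≤ vecLinf v :=
  le_ciSup (f := fun p => |v p|) (Set.finite_range _).bddAbove q

theorem dotProduct_le_mul_vecL1 {n : ℕ} {u : Fin n → ℝ} {c : ℝ} (hu : ∀ q, |u q| ≤ c)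
    (v : Fin n → ℝ) : u ⬝ᵥ v ≤ c * vecL1 v := by
  rw [vecL1, Finset.mul_sum]
  refine Finset.sum_le_sum fun q _ => ?_
  calc u q * v q ≤ |u q| * |v q| := abs_mul (u q) (v q) ▸ le_abs_self _
    _ ≤ c * |v q| := mul_le_mul_of_nonneg_right (hu q) (abs_nonneg _)

theorem dotProduct_le_vecL1_mul_vecLinf {n : ℕ} (u v : Fin n → ℝ) :
    u ⬝ᵥ v ≤ vecL1 u * vecLinf v := by
  rw [dotProduct_comm, mul_comm]
  exact dotProduct_le_mul_vecL1 (le_vecLinf v) u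

theorem mulVec_margin_sub_le {m n : ℕ} (A A' : Matrix (Fin m) (Fin n) ℝ) {ε : ℝ}
    (hA' : ∀ p q, |A' p q - A p q| ≤ ε) (z z' : Fin n → ℝ) (i j : Fin m) :
    (A' *ᵥ z') i - (A' *ᵥ z') j - ((A *ᵥ z) i - (A *ᵥ z) j) ≤
      vecL1 (fun q => A i q - A j q) * vecLinf (z' - z) + 2 * ε * vecL1 z' := by
  have hsplit : (A' *ᵥ z') i - (A' *ᵥ z') j - ((A *ᵥ z) i - (A *ᵥ z) j) =
      (fun q => A i q - A j q) ⬝ᵥ (z' - z) +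
        (fun q => (A' i q - A i q) - (A' j q - A j q)) ⬝ᵥ z' := by
    simp only [mulVec, dotProduct, Pi.sub_apply, ← Finset.sum_sub_distrib,
      ← Finset.sum_add_distrib]
    exact Finset.sum_congr rfl fun q _ => by ring
  have hrow (q : Fin n) : |(A' i q - A i q) - (A' j q - A j q)| ≤ 2 * ε := by
    linarith [abs_sub (A' i q - A i q) (A' j q - A j q), hA' i q, hA' j q]
  rw [hsplit]
  exact add_le_add (dotProduct_le_vecL1_mul_vecLinf _ _) (dotProduct_le_mul_vecL1 hrow z')

theorem statement11_general (d : ℕ → ℕ) (ρ : ℝ → ℝ)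
    (L : ℕ)
    (W : ∀ k, Matrix (Fin (d (k + 1))) (Fin (d k)) ℝ)
    (WhatL : Matrix (Fin (d (L - 1 + 1))) (Fin (d (L - 1))) ℝ)
    (εL : ℝ)
    (hWL : ∀ p q, |WhatL p q - W (L - 1) p q| ≤ εL)
    (x xhat : Fin (d 0) → ℝ)
    (i j : Fin (d (L - 1 + 1))) :
    (WhatL.mulVec (zLayer d ρ W (L - 1) xhat) i -
        WhatL.mulVec (zLayer d ρ W (L - 1) xhat) j) -
      (nnet d ρ W (L - 1) x i - nnet d ρ W (L - 1) x j) ≤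
    vecL1 (fun q => W (L - 1) i q - W (L - 1) j q) *
        vecLinf (fun p => zLayer d ρ W (L - 1) xhat p - zLayer d ρ W (L - 1) x p) +
      2 * εL * vecL1 (zLayer d ρ W (L - 1) xhat) :=
  mulVec_margin_sub_le (W (L - 1)) WhatL hWL _ _ i j

/-- for an `L`-layer network with nonnegative activation, last
weight matrix replaced by `Ŵ^L ∈ B_{W^L}(ε_L)` and input by `x̂ ∈ B_x(ε_x)`:
`f^{ij}_{Ŵ}(x̂) − f^{ij}_W(x) ≤ ‖W^L_{i,:} − W^L_{j,:}‖_1 ‖z^{L−1}_W(x̂) − z^{L−1}_W(x)‖_∞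
  + 2 ε_L ‖z^{L−1}_W(x̂)‖_1`.
(`W k` is the paper's `W^{k+1}`; the perturbed network is
`WhatL.mulVec (zLayer d ρ W (L-1) xhat)` and `z^{L-1}_W = zLayer d ρ W (L-1)`.) -/
theorem statement11 (d : ℕ → ℕ) (ρ : ℝ → ℝ)
    (hρ_nonneg : ∀ t, 0 ≤ ρ t)
    (L : ℕ) (hL : 1 ≤ L)
    (W : ∀ k, Matrix (Fin (d (k + 1))) (Fin (d k)) ℝ)
    (WhatL : Matrix (Fin (d (L - 1 + 1))) (Fin (d (L - 1))) ℝ)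
    (εL εx : ℝ) (hεL : 0 ≤ εL) (hεx : 0 ≤ εx)
    (hWL : ∀ p q, |WhatL p q - W (L - 1) p q| ≤ εL)
    (x xhat : Fin (d 0) → ℝ) (hx : ∀ q, |xhat q - x q| ≤ εx)
    (i j : Fin (d (L - 1 + 1))) :
    (WhatL.mulVec (zLayer d ρ W (L - 1) xhat) i -
        WhatL.mulVec (zLayer d ρ W (L - 1) xhat) j) -
      (nnet d ρ W (L - 1) x i - nnet d ρ W (L - 1) x j) ≤
    vecL1 (fun q => W (L - 1) i q - W (L - 1) j q) *
        vecLinf (fun p => zLayer d ρ W (L - 1) xhat p - zLayer d ρ W (L - 1) x p) +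
      2 * εL * vecL1 (zLayer d ρ W (L - 1) xhat) :=
  statement11_general d ρ L W WhatL εL hWL x xhat i j
end
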